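/- Consider the star graph with center v_s of vertex weight 0 and n ≥ 1 leaves b_1, …, b_n, where leaf b_i has vertex weight 1 and the edge (v_s, b_i) has weight i. Then the minimum agent count over all closed covering walks from v_s equals n + 1, and it is attained by visiting the leaves in decreasing order of edge weights b_n, b_{n−1}, …, b_1. Moreover, every closed covering walk with agent count n + 1 makes its first visits to the leaves exactly in this decreasing order. -/

import Mathlib

/-! Strategic deployment: common definitions.

A walk is scanned with a state consisting of the set of already-visited
vertices, the number `curr` of currently available (non-settled) agents, and
the number `add` of additional agents (beyond `N = ∑ v, wV v`) recruited so
far.  Crossing an edge `e` requires `curr ≥ wE e` (topping up `add`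
otherwise); the first visit of a vertex `v` settles `wV v` agents there. -/

namespace Deploy

structure St (V : Type*) (α : Type*) where
  visited : Finset V
  curr : α
  add : α

variable {V : Type*} [DecidableEq V] {α : Type*} [AddCommMonoid α] [LinearOrder α] [IsOrderedAddMonoid α] [Sub α]

/-- Scan step for crossing an edge `e`. -/
def crossEdge (wE : Sym2 V → α) (e : Sym2 V) (s : St V α) : St V α :=
  if s.curr < wE e then ⟨s.visited, wE e, s.add + (wE e - s.curr)⟩ else s

/-- Scan step for visiting a vertex `v` (only first visits have an effect). -/
def visitVtx (wV : V → α) (v : V) (s : St V α) : St V α :=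
  if v ∈ s.visited then s
  else if s.curr < wV v then ⟨insert v s.visited, 0, s.add + (wV v - s.curr)⟩
  else ⟨insert v s.visited, s.curr - wV v, s.add⟩

variable {G : SimpleGraph V}

/-- Scanning a walk: alternately cross the next edge and visit the next vertex. -/
def scanWalk (wE : Sym2 V → α) (wV : V → α) : {u t : V} → G.Walk u t → St V α → St V α
  | _, _, .nil, s => s
  | u, _, .cons (v := v) _ p, s => scanWalk wE wV p (visitVtx wV v (crossEdge wE s(u, v) s))

/-- The agent count of a walk `p` starting at `vs`: the scan starts with
`curr = N = ∑ v, wV v` and `add = 0`, first visiting the start vertex; the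
agent count is `N` plus the final value of `add`. -/
def agentCount [Fintype V] (wE : Sym2 V → α) (wV : V → α) {vs t : V} (p : G.Walk vs t) : α :=
  (∑ v, wV v) + (scanWalk wE wV p (visitVtx wV vs ⟨∅, ∑ v, wV v, 0⟩)).add

/-- A walk is covering if every vertex of the graph appears on it. -/
def IsCovering {vs t : V} (p : G.Walk vs t) : Prop := ∀ v : V, v ∈ p.support

end Deploy

namespace Deploy

/-- The star graph on `Option (Fin n)`: the center `none` is adjacent to every
leaf `some i`, and there are no other edges. -/
def starGraph (n : ℕ) : SimpleGraph (Option (Fin n)) :=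
  SimpleGraph.fromRel (fun u _ => u = none)

/-- Edge weights of the weighted star: the edge from the center to leaf `b_i`
(`i` counted from `1`) has weight `i`; formally the edge `s(none, some i)` has
weight `i + 1`. -/
def starWE (n : ℕ) : Sym2 (Option (Fin n)) → ℕ :=
  Sym2.lift ⟨fun u v =>
    match u, v with
    | none, some i => (i : ℕ) + 1
    | some i, none => (i : ℕ) + 1
    | _, _ => 0,
    by rintro (_ | i) (_ | j) <;> rfl⟩

/-- Vertex weights of the weighted star: the center has weight `0`, every leaf
has weight `1`. -/
def starWV (n : ℕ) : Option (Fin n) → ℕ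
  | none => 0
  | some _ => 1

end Deploy

/-!
Scanning a walk conserves agents: at every moment the available agents plus the settled ones
number `N + add`, and `add` never decreases. A closed walk from the center of the star is a
sequence of excursions to leaves. Back at the center after the first visit to leaf `j` (edge
weight `j + 1`), at least `j + 1` agents are available and one agent sits on each of the `k`
leaves visited so far, so the agent count is at least `j + 1 + k`. For `j = n - 1` this gives
`n + 1`; and if the count is `n + 1`, then leaf `j` is among the first `n - j` leaves visited,
which forces the decreasing order. In that order only the first excursion needs an extra agent.
-/

open Finset in
theorem Fin.strictAnti_of_card_filter_le {n : ℕ} (f : Fin n → ℕ)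
    (hf : ∀ j : Fin n, #{k | f k ≤ f j} ≤ n - j) : StrictAnti f := by
  have le_of_dominates : ∀ i m : Fin n, (∀ k ≥ i, f k ≤ f m) → m ≤ i := by
    intro i m hm
    have : n - (i : ℕ) ≤ n - m := calc
      n - (i : ℕ) = #(Ici i) := (Fin.card_Ici i).symm
      _ ≤ #{k | f k ≤ f m} :=
        card_le_card fun k hk => mem_filter.2 ⟨mem_univ _, hm k (mem_Ici.1 hk)⟩
      _ ≤ n - m := hf m
    have := i.isLt
    exact Fin.le_iff_val_le_val.2 (by omega)
  intro i j hij
  -- so a maximizer of `f` on `[i, n)` can only be `i`, and `j > i` is not one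
  obtain ⟨k, hk, hmax⟩ := exists_max_image (Ici i) f ⟨i, mem_Ici.2 le_rfl⟩
  obtain rfl : k = i :=
    le_antisymm (le_of_dominates i k fun l hl => hmax l (mem_Ici.2 hl)) (mem_Ici.1 hk)
  refine (hmax j (mem_Ici.2 hij.le)).lt_of_ne fun hji => ?_
  exact (le_of_dominates k j fun l hl => hji ▸ hmax l (mem_Ici.2 hl)).not_gt hij

namespace Deploy

open Finset

section Scan

variable {V : Type*} {G : SimpleGraph V} (wE : Sym2 V → ℕ) (wV : V → ℕ)

def scanState [DecidableEq V] [Fintype V] {u t : V} (p : G.Walk u t) : St V ℕ :=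
  scanWalk wE wV p (visitVtx wV u ⟨∅, ∑ v, wV v, 0⟩)

def Balanced (N : ℕ) (s : St V ℕ) : Prop :=
  s.curr + ∑ v ∈ s.visited, wV v = N + s.add

variable {wE wV}

lemma crossEdge_visited (e : Sym2 V) (s : St V ℕ) : (crossEdge wE e s).visited = s.visited := by
  unfold crossEdge; split_ifs <;> rfl

lemma le_crossEdge_add (e : Sym2 V) (s : St V ℕ) : s.add ≤ (crossEdge wE e s).add := by
  unfold crossEdge; split_ifs <;> simp

lemma le_crossEdge_curr (e : Sym2 V) (s : St V ℕ) : wE e ≤ (crossEdge wE e s).curr := by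
  unfold crossEdge; split_ifs <;> simp_all

lemma Balanced.crossEdge {N : ℕ} {s : St V ℕ} (h : Balanced wV N s) (e : Sym2 V) :
    Balanced wV N (crossEdge wE e s) := by
  unfold Balanced Deploy.crossEdge at *; split_ifs
  · simp only; omega
  · exact h

variable [DecidableEq V]

lemma visitVtx_visited (v : V) (s : St V ℕ) :
    (visitVtx wV v s).visited = insert v s.visited := by
  unfold visitVtx; split_ifs with hv <;> simp [hv]

lemma le_visitVtx_add (v : V) (s : St V ℕ) : s.add ≤ (visitVtx wV v s).add := by
  unfold visitVtx; split_ifs <;> simp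

lemma visitVtx_curr_of_eq_zero {v : V} (hv : wV v = 0) (s : St V ℕ) :
    (visitVtx wV v s).curr = s.curr := by
  unfold visitVtx; split_ifs <;> simp_all

lemma Balanced.visitVtx {N : ℕ} {s : St V ℕ} (h : Balanced wV N s) (v : V) :
    Balanced wV N (visitVtx wV v s) := by
  unfold Balanced Deploy.visitVtx at *
  split_ifs with hv hlt
  · exact h
  all_goals simp only [Finset.sum_insert hv]; omega

lemma scanWalk_append {u v w : V} (p : G.Walk u v) (q : G.Walk v w) (s : St V ℕ) :
    scanWalk wE wV (p.append q) s = scanWalk wE wV q (scanWalk wE wV p s) := by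
  induction p generalizing s with
  | nil => rfl
  | cons _ p ih => exact ih q _

lemma scanWalk_visited {u v : V} (p : G.Walk u v) (s : St V ℕ) :
    (scanWalk wE wV p s).visited = s.visited ∪ p.support.tail.toFinset := by
  induction p generalizing s with
  | nil => simp [scanWalk]
  | cons _ p ih =>
    rw [scanWalk, ih, visitVtx_visited, crossEdge_visited, SimpleGraph.Walk.support_cons,
      List.tail_cons]
    ext; simp [p.mem_support_iff, or_left_comm]

lemma le_scanWalk_add {u v : V} (p : G.Walk u v) (s : St V ℕ) :
    s.add ≤ (scanWalk wE wV p s).add := by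
  induction p generalizing s with
  | nil => exact le_rfl
  | cons _ p ih => exact (le_crossEdge_add _ _).trans ((le_visitVtx_add _ _).trans (ih _))

lemma Balanced.scanWalk {N : ℕ} {s : St V ℕ} (h : Balanced wV N s) {u v : V} (p : G.Walk u v) :
    Balanced wV N (scanWalk wE wV p s) := by
  induction p generalizing s with
  | nil => exact h
  | cons _ p ih => exact ih ((h.crossEdge _).visitVtx _)

variable [Fintype V]

lemma agentCount_eq_add_scanState {u v : V} (p : G.Walk u v) :
    agentCount wE wV p = ∑ x, wV x + (scanState wE wV p).add := rfl

lemma scanState_append {u v w : V} (p : G.Walk u v) (q : G.Walk v w) :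
    scanState wE wV (p.append q) = scanWalk wE wV q (scanState wE wV p) :=
  scanWalk_append p q _

lemma scanState_visited {u v : V} (p : G.Walk u v) :
    (scanState wE wV p).visited = p.support.toFinset := by
  rw [scanState, scanWalk_visited, visitVtx_visited]
  ext; simp [p.mem_support_iff]

lemma balanced_scanState {u v : V} (p : G.Walk u v) :
    Balanced wV (∑ x, wV x) (scanState wE wV p) := by
  have hinit : Balanced wV (∑ x, wV x) ⟨∅, ∑ x, wV x, 0⟩ := by simp [Balanced]
  exact (hinit.visitVtx u).scanWalk p

lemma curr_add_sum_support_le_agentCount {u v w : V} (p : G.Walk u v) (q : G.Walk v w) :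
    (scanState wE wV p).curr + ∑ x ∈ p.support.toFinset, wV x ≤
      agentCount wE wV (p.append q) := by
  have hbal := balanced_scanState (wE := wE) (wV := wV) p
  rw [Balanced, scanState_visited] at hbal
  rw [agentCount_eq_add_scanState, scanState_append, hbal]
  exact Nat.add_le_add_left (le_scanWalk_add q _) _

end Scan

variable {n : ℕ}

lemma starGraph_adj_none_some (i : Fin n) : (starGraph n).Adj none (some i) := by
  simp [starGraph]

lemma starGraph_not_adj_some_some (i j : Fin n) : ¬(starGraph n).Adj (some i) (some j) := by
  simp [starGraph]

lemma sum_starWV : ∑ v, starWV n v = n := by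
  simp [Fintype.sum_option, starWV]

def toWalk : List (Fin n) → (starGraph n).Walk none none
  | [] => .nil
  | i :: L => .cons (starGraph_adj_none_some i) (.cons (starGraph_adj_none_some i).symm (toWalk L))

lemma toWalk_append (L₁ L₂ : List (Fin n)) :
    toWalk (L₁ ++ L₂) = (toWalk L₁).append (toWalk L₂) := by
  induction L₁ with
  | nil => rfl
  | cons i L ih => simp [toWalk, ih]

lemma exists_eq_toWalk : ∀ p : (starGraph n).Walk none none, ∃ L, p = toWalk L
  | .nil => ⟨[], rfl⟩
  | .cons (v := none) h _ => absurd h (SimpleGraph.irrefl _)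
  | .cons (v := some _) _ (.cons (v := some _) h _) => absurd h (starGraph_not_adj_some_some _ _)
  | .cons (v := some i) _ (.cons (v := none) _ p) =>
    let ⟨L, hL⟩ := exists_eq_toWalk p
    ⟨i :: L, hL ▸ rfl⟩

lemma support_toWalk_cons (i : Fin n) (L : List (Fin n)) :
    (toWalk (i :: L)).support = none :: some i :: (toWalk L).support := rfl

lemma some_mem_support_toWalk {L : List (Fin n)} {i : Fin n} :
    some i ∈ (toWalk L).support ↔ i ∈ L := by
  induction L with
  | nil => simp [toWalk]
  | cons j L ih => simp [support_toWalk_cons, ih, eq_comm]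

lemma isCovering_toWalk_iff {L : List (Fin n)} : IsCovering (toWalk L) ↔ ∀ i, i ∈ L := by
  refine ⟨fun h i => some_mem_support_toWalk.1 (h (some i)), fun h v => ?_⟩
  cases v with
  | none => exact (toWalk L).start_mem_support
  | some i => exact some_mem_support_toWalk.2 (h i)

lemma sum_starWV_support_toWalk (L : List (Fin n)) :
    ∑ v ∈ (toWalk L).support.toFinset, starWV n v = #L.toFinset := by
  have : (toWalk L).support.toFinset = insert none (L.toFinset.image some) := by
    ext (_ | i)
    · simp [(toWalk L).start_mem_support]
    · simp [some_mem_support_toWalk]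
  rw [this, sum_insert (by simp), sum_image (fun _ _ _ _ h => Option.some_injective _ h)]
  simp [starWV]

lemma idxOf_support_toWalk (L : List (Fin n)) (i : Fin n) :
    (toWalk L).support.idxOf (some i) = 2 * L.idxOf i + 1 := by
  induction L with
  | nil => simp [toWalk]
  | cons j L ih =>
    rw [support_toWalk_cons, List.idxOf_cons_ne _ (by simp)]
    by_cases hji : j = i
    · simp [hji]
    · rw [List.idxOf_cons_ne _ (by simpa using hji), ih, List.idxOf_cons_ne _ hji]
      omega

lemma le_curr_scanWalk_toWalk_singleton (i : Fin n) (s : St (Option (Fin n)) ℕ) :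
    (i : ℕ) + 1 ≤ (scanWalk (starWE n) (starWV n) (toWalk [i]) s).curr := by
  simp only [toWalk, scanWalk]
  rw [visitVtx_curr_of_eq_zero (wV := starWV n) (v := none) rfl]
  exact le_crossEdge_curr (wE := starWE n) s(some i, none) _

/-- A first excursion to leaf `i` raises `curr` to the weight `i + 1` of its edge if needed,
settles one agent there, and raises `curr` again if it is not enough to return. -/
lemma scanWalk_toWalk_singleton_of_notMem {i : Fin n} {s : St (Option (Fin n)) ℕ}
    (hi : some i ∉ s.visited) :
    scanWalk (starWE n) (starWV n) (toWalk [i]) s =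
      ⟨insert none (insert (some i) s.visited), max s.curr (i + 2) - 1,
        s.add + (i + 2 - s.curr)⟩ := by
  obtain ⟨vis, c, a⟩ := s
  have hE₁ : starWE n s(none, some i) = i + 1 := rfl
  have hE₂ : starWE n s(some i, none) = i + 1 := rfl
  have hV₁ : starWV n (some i) = 1 := rfl
  have hV₀ : starWV n none = 0 := rfl
  simp only [toWalk, scanWalk, crossEdge, visitVtx, hE₁, hE₂, hV₁, hV₀] at hi ⊢
  split_ifs <;> simp_all <;> omega

/-- Back at the center after the first visit to `j`, at least `j + 1` agents are available and
one agent is settled on every leaf visited so far. -/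
lemma le_agentCount_toWalk_of_mem {L : List (Fin n)} {j : Fin n} (hj : j ∈ L) :
    (j : ℕ) + 1 + #(L.take (L.idxOf j + 1)).toFinset ≤
      agentCount (starWE n) (starWV n) (toWalk L) := by
  set m := L.idxOf j
  have htake : L.take m ++ [j] = L.take (m + 1) := by
    have hm : m < L.length := List.idxOf_lt_length_iff.2 hj
    simpa [m, List.getElem_idxOf] using L.take_concat_get' m hm
  have hcurr :
      (j : ℕ) + 1 ≤ (scanState (starWE n) (starWV n) (toWalk (L.take (m + 1)))).curr := by
    rw [← htake, toWalk_append, scanState_append]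
    exact le_curr_scanWalk_toWalk_singleton j _
  have hle := curr_add_sum_support_le_agentCount (wE := starWE n) (wV := starWV n)
    (toWalk (L.take (m + 1))) (toWalk (L.drop (m + 1)))
  rw [← toWalk_append, List.take_append_drop, sum_starWV_support_toWalk] at hle
  omega

lemma succ_le_agentCount (hn : 0 < n) {q : (starGraph n).Walk none none} (hq : IsCovering q) :
    n + 1 ≤ agentCount (starWE n) (starWV n) q := by
  obtain ⟨L, rfl⟩ := exists_eq_toWalk q
  obtain ⟨j, hjn⟩ : ∃ j : Fin n, (j : ℕ) = n - 1 := ⟨⟨n - 1, by omega⟩, rfl⟩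
  have hj : j ∈ L := isCovering_toWalk_iff.1 hq j
  have hpos : 0 < #(L.take (L.idxOf j + 1)).toFinset :=
    card_pos.2 ⟨j, List.mem_toFinset.2 ((List.mem_take_iff_idxOf_lt hj).2 (Nat.lt_succ_self _))⟩
  have := le_agentCount_toWalk_of_mem hj
  omega

/-- With agent count `n + 1`, leaf `j` is among the first `n - j` leaves visited. -/
lemma strictAnti_idxOf_of_agentCount_le {L : List (Fin n)} (hL : ∀ i, i ∈ L)
    (h : agentCount (starWE n) (starWV n) (toWalk L) ≤ n + 1) :
    StrictAnti fun i => L.idxOf i := by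
  refine Fin.strictAnti_of_card_filter_le _ fun j => ?_
  have hsub : ({k | L.idxOf k ≤ L.idxOf j} : Finset (Fin n)) ⊆
      (L.take (L.idxOf j + 1)).toFinset := fun k hk =>
    List.mem_toFinset.2 ((List.mem_take_iff_idxOf_lt (hL k)).2
      (Nat.lt_succ_of_le (mem_filter.1 hk).2))
  have := card_le_card hsub
  have := le_agentCount_toWalk_of_mem (hL j)
  omega

lemma idxOf_support_lt_of_agentCount_le {q : (starGraph n).Walk none none} (hq : IsCovering q)
    (h : agentCount (starWE n) (starWV n) q ≤ n + 1) {i j : Fin n} (hij : i < j) :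
    q.support.idxOf (some j) < q.support.idxOf (some i) := by
  obtain ⟨L, rfl⟩ := exists_eq_toWalk q
  have : L.idxOf j < L.idxOf i :=
    strictAnti_idxOf_of_agentCount_le (isCovering_toWalk_iff.1 hq) h hij
  simp only [idxOf_support_toWalk]
  omega

/-- Along decreasing leaves, only the first excursion can need extra agents: `curr` drops by one
per leaf and stays above the next edge weight. -/
lemma add_scanWalk_toWalk_le_of_pairwise {L : List (Fin n)} (hL : L.Pairwise (· > ·))
    {s : St (Option (Fin n)) ℕ} (hfresh : ∀ i ∈ L, some i ∉ s.visited) {d : ℕ}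
    (hd : ∀ i ∈ L, (i : ℕ) + 2 ≤ s.curr + d) :
    (scanWalk (starWE n) (starWV n) (toWalk L) s).add ≤ s.add + d := by
  induction L generalizing s d with
  | nil => exact Nat.le_add_right _ _
  | cons i L ih =>
    rw [List.pairwise_cons] at hL
    have hi := hd i List.mem_cons_self
    change (scanWalk _ _ (toWalk L) (scanWalk _ _ (toWalk [i]) s)).add ≤ _
    rw [scanWalk_toWalk_singleton_of_notMem (hfresh i List.mem_cons_self)]
    refine (ih hL.2 (d := d - (i + 2 - s.curr)) ?_ ?_).trans (by dsimp only; omega)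
    · intro k hk
      have hki : some k ≠ some i := by simpa using (hL.1 k hk).ne
      simpa [hki] using hfresh k (List.mem_cons_of_mem _ hk)
    · intro k hk
      have : (k : ℕ) < i := hL.1 k hk
      dsimp only
      omega

lemma agentCount_toWalk_reverse_finRange_le :
    agentCount (starWE n) (starWV n) (toWalk (List.finRange n).reverse) ≤ n + 1 := by
  have hinit : visitVtx (starWV n) none ⟨∅, ∑ v, starWV n v, 0⟩ = ⟨{none}, n, 0⟩ := by
    simp [visitVtx, starWV]
  rw [agentCount_eq_add_scanState, sum_starWV, scanState, hinit]
  have := add_scanWalk_toWalk_le_of_pairwise (L := (List.finRange n).reverse)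
    (s := ⟨{none}, n, 0⟩) (d := 1) (List.pairwise_reverse.2 (List.pairwise_lt_finRange n))
    (by simp) (fun i _ => by dsimp only; omega)
  dsimp only at this
  omega

end Deploy

/-- for the star with center `v_s` (weight 0) and `n ≥ 1` leaves
`b_1, …, b_n`, where leaf `b_i` has vertex weight `1` and its edge has weight
`i`, the minimum agent count over all closed covering walks from the center
equals `n + 1`; it is attained by visiting the leaves in decreasing order of
the edge weights `b_n, …, b_1`, and every closed covering walk with agent
count `n + 1` makes its first visits to the leaves exactly in this decreasing
order. -/
theorem star_decreasing_order_optimal (n : ℕ) (hn : 0 < n) :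
    (∃ p : (Deploy.starGraph n).Walk none none,
      Deploy.IsCovering p ∧
      Deploy.agentCount (Deploy.starWE n) (Deploy.starWV n) p = n + 1 ∧
      ∀ i j : Fin n, i < j →
        p.support.idxOf (some j) < p.support.idxOf (some i)) ∧
    (∀ q : (Deploy.starGraph n).Walk none none, Deploy.IsCovering q →
      n + 1 ≤ Deploy.agentCount (Deploy.starWE n) (Deploy.starWV n) q) ∧
    (∀ q : (Deploy.starGraph n).Walk none none, Deploy.IsCovering q →
      Deploy.agentCount (Deploy.starWE n) (Deploy.starWV n) q = n + 1 →
      ∀ i j : Fin n, i < j →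
        q.support.idxOf (some j) < q.support.idxOf (some i)) := by
  have hcov : Deploy.IsCovering (Deploy.toWalk (List.finRange n).reverse) :=
    Deploy.isCovering_toWalk_iff.2 fun i => List.mem_reverse.2 (List.mem_finRange i)
  have hopt := Deploy.agentCount_toWalk_reverse_finRange_le (n := n)
  refine ⟨⟨_, hcov, le_antisymm hopt (Deploy.succ_le_agentCount hn hcov),
      fun _ _ => Deploy.idxOf_support_lt_of_agentCount_le hcov hopt⟩,
    fun _ => Deploy.succ_le_agentCount hn,
    fun _ hq h _ _ => Deploy.idxOf_support_lt_of_agentCount_le hq h.le⟩
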